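/- Multilevel construction: let S ⊆ F_2^n be a binary constant-weight code of weight k and minimum Hamming distance 2δ, and for each v ∈ S let C_v be an (F_v, |C_v|, δ)_q Ferrers diagram rank-metric code. Then the union of the lifted codes ⋃_{v∈S} L(C_v) is an (n, Σ_{v∈S}|C_v|, 2δ, {k})_q constant dimension code. -/

import Mathlib

/-- The subspace distance `d_S(U,V) = dim(U+V) - dim(U∩V)`. -/
noncomputable def sdist {F : Type*} [Field F] {n : ℕ} (U V : Submodule F (Fin n → F)) : ℕ :=
  Module.finrank F ↥(U ⊔ V) - Module.finrank F ↥(U ⊓ V)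

/-- The RREF generator matrix determined by an identifying vector (via the strictly
monotone enumerations `e` of its pivots and `c` of its non-pivots) and a Ferrers tableaux
filling `A`. -/
def liftMat {F : Type*} [Field F] {n k : ℕ} (e : Fin k → Fin n) (c : Fin (n - k) → Fin n)
    (A : Matrix (Fin k) (Fin (n - k)) F) : Matrix (Fin k) (Fin n) F :=
  fun i t => (if t = e i then 1 else 0) + ∑ j, if t = c j then A i j else 0

/-! `liftMat e c A` is `[I | A]` up to a permutation of the columns: its columns at the pivots
`e` form an identity block and its other columns are those of `A`, so every lifted subspace has
dimension `k`, and `d_S(U, U') = 2 (dim (U + U') - k)` for two of them.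

If the identifying vectors agree, `liftMat A - liftMat B` is `A - B` placed in the non-pivot
columns; its row space vanishes on the pivot columns, hence meets `U` trivially, and
`dim (U + U') ≥ k + rank (A - B) ≥ k + δ`.

If they differ, every position of `supp v ∪ supp v'` is the leading position of a row of one of
the two echelon matrices, so
`dim (U + U') ≥ |supp v ∪ supp v'| = k + d_H(v, v') / 2 ≥ k + δ`. -/

open Module Submodule
open scoped Matrix

section LeadingPositions

variable {F σ : Type*} [Field F] [LinearOrder σ]

theorem linearIndependent_of_injective_leading {ι : Type*} {x : ι → σ → F} {p : ι → σ}
    (hp : Function.Injective p) (hlead : ∀ i, x i (p i) ≠ 0)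
    (hzero : ∀ i, ∀ s < p i, x i s = 0) : LinearIndependent F x := by
  classical
  rw [linearIndependent_iff']
  intro I g hg i hi
  by_contra hgi
  obtain ⟨i₀, hi₀, hmin⟩ := (I.filter fun j => g j ≠ 0).exists_min_image p
    ⟨i, Finset.mem_filter.2 ⟨hi, hgi⟩⟩
  rw [Finset.mem_filter] at hi₀
  -- Evaluate the relation at the smallest leading position occurring with a nonzero coefficient.
  have hval : ∑ j ∈ I, g j * x j (p i₀) = 0 := by
    simpa [Finset.sum_apply] using congrFun hg (p i₀)
  rw [Finset.sum_eq_single_of_mem i₀ hi₀.1] at hval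
  · exact hi₀.2 ((mul_eq_zero.1 hval).resolve_right (hlead i₀))
  · intro j hj hji₀
    by_cases hgj : g j = 0
    · rw [hgj, zero_mul]
    · have hlt : p i₀ < p j := (hmin j (Finset.mem_filter.2 ⟨hj, hgj⟩)).lt_of_ne
        fun h => hji₀ (hp h.symm)
      rw [hzero j _ hlt, mul_zero]

theorem card_le_finrank_of_forall_exists_leading [Finite σ] (W : Submodule F (σ → F))
    (T : Finset σ) (hT : ∀ t ∈ T, ∃ x ∈ W, x t ≠ 0 ∧ ∀ s < t, x s = 0) :
    T.card ≤ finrank F W := by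
  choose x hxW hlead hzero using hT
  have hli : LinearIndependent F fun t : T => x t t.2 :=
    linearIndependent_of_injective_leading Subtype.val_injective (fun t => hlead t t.2)
      (fun t => hzero t t.2)
  rw [← Fintype.card_coe, ← finrank_span_eq_card hli]
  exact finrank_mono (span_le.2 (Set.range_subset_iff.2 fun t => hxW t t.2))

end LeadingPositions

theorem Matrix.rank_eq_finrank_span_range {F ι σ : Type*} [Field F] [Finite ι] [Fintype σ]
    (A : Matrix ι σ F) : A.rank = finrank F (span F (Set.range A)) :=
  A.rank_eq_finrank_span_row

section RowSpaces

variable {F ι κ σ : Type*} [Field F] [Fintype ι] [Fintype κ] [Fintype σ] [DecidableEq ι]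

theorem span_range_inf_eq_bot_of_mul {M : Matrix ι σ F} {R : Matrix κ σ F} {N : Matrix σ ι F}
    (hM : M * N = 1) (hR : R * N = 0) :
    span F (Set.range M) ⊓ span F (Set.range R) = ⊥ := by
  rw [eq_bot_iff]
  rintro x ⟨hxM, hxR⟩
  obtain ⟨z, hz⟩ : x ∈ LinearMap.range R.vecMulLinear := by rwa [range_vecMulLinear]
  obtain ⟨y, rfl⟩ : x ∈ LinearMap.range M.vecMulLinear := by rwa [range_vecMulLinear]
  have hy : y = 0 := by
    simp only [Matrix.vecMulLinear_apply] at hz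
    calc y = y ᵥ* (M * N) := by rw [hM, Matrix.vecMul_one]
      _ = z ᵥ* (R * N) := by rw [← Matrix.vecMul_vecMul, ← Matrix.vecMul_vecMul, hz]
      _ = 0 := by rw [hR, Matrix.vecMul_zero]
  simp [hy]

theorem finrank_span_range_of_mul_eq_one {M : Matrix ι σ F} {N : Matrix σ ι F}
    (hM : M * N = 1) : finrank F (span F (Set.range M)) = Fintype.card ι := by
  rw [← M.rank_eq_finrank_span_range]
  refine le_antisymm M.rank_le_card_height ?_
  simpa [hM] using M.rank_mul_le_left N

/-- The row space of `M - M'` is killed by `N`, so it meets the row space of `M` trivially. -/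
theorem finrank_span_add_rank_sub_le_finrank_sup {M M' : Matrix ι σ F} {N : Matrix σ ι F}
    (hM : M * N = 1) (hM' : M' * N = 1) :
    finrank F (span F (Set.range M)) + (M - M').rank ≤
      finrank F ↥(span F (Set.range M) ⊔ span F (Set.range M')) := by
  have hinf := span_range_inf_eq_bot_of_mul hM (R := M - M')
    (by rw [Matrix.sub_mul, hM, hM', sub_self])
  have hle : span F (Set.range (M - M')) ≤ span F (Set.range M) ⊔ span F (Set.range M') :=
    span_le.2 <| Set.range_subset_iff.2 fun i =>
      sub_mem (mem_sup_left (subset_span ⟨i, rfl⟩)) (mem_sup_right (subset_span ⟨i, rfl⟩))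
  have hsum := finrank_sup_add_finrank_inf_eq (span F (Set.range M)) (span F (Set.range (M - M')))
  rw [hinf, finrank_bot, add_zero] at hsum
  rw [Matrix.rank_eq_finrank_span_range, ← hsum]
  exact finrank_mono (sup_le le_sup_left hle)

end RowSpaces

theorem Matrix.rank_mul_eq_left_of_mul_eq_one {R ι κ σ : Type*} [CommRing R]
    [StrongRankCondition R] [Fintype ι] [Fintype σ] [DecidableEq ι] {D : Matrix κ ι R}
    {P : Matrix ι σ R} {P' : Matrix σ ι R} (hP : P * P' = 1) : (D * P).rank = D.rank :=
  le_antisymm (D.rank_mul_le_left P) <| by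
    simpa [Matrix.mul_assoc, hP] using (D * P).rank_mul_le_left P'

section SubspaceDistance

variable {F : Type*} [Field F] {n : ℕ}

theorem sdist_self (U : Submodule F (Fin n → F)) : sdist U U = 0 := by
  rw [sdist, sup_idem, inf_idem, Nat.sub_self]

theorem two_mul_le_sdist {U V : Submodule F (Fin n → F)} {k d : ℕ} (hU : finrank F U = k)
    (hV : finrank F V = k) (h : k + d ≤ finrank F ↥(U ⊔ V)) : 2 * d ≤ sdist U V := by
  have := finrank_sup_add_finrank_inf_eq U V
  unfold sdist
  omega

end SubspaceDistance

section BinaryVectors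

variable {σ : Type*} [Fintype σ] [DecidableEq σ]

theorem card_filter_add_card_filter_add_card_filter_ne (v v' : σ → Bool) :
    (Finset.univ.filter fun j => v j = true).card + (Finset.univ.filter fun j => v' j = true).card +
        (Finset.univ.filter fun j => v j ≠ v' j).card =
      2 * ((Finset.univ.filter fun j => v j = true) ∪
        (Finset.univ.filter fun j => v' j = true)).card := by
  set s := Finset.univ.filter fun j => v j = true
  set s' := Finset.univ.filter fun j => v' j = true
  have hdiff : (Finset.univ.filter fun j => v j ≠ v' j) = (s ∪ s') \ (s ∩ s') := by
    ext j
    cases hv : v j <;> cases hv' : v' j <;> simp [s, s', hv, hv']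
  rw [hdiff, Finset.card_sdiff_of_subset Finset.inter_subset_union]
  have := Finset.card_union_add_card_inter s s'
  have := Finset.card_le_card (Finset.inter_subset_union (s := s) (t := s'))
  omega

theorem image_eq_filter_of_card_eq {k : ℕ} {v : σ → Bool} {e : Fin k → σ}
    (he : Function.Injective e) (hev : ∀ i, v (e i) = true)
    (hk : (Finset.univ.filter fun j => v j = true).card = k) :
    Finset.univ.image e = Finset.univ.filter fun j => v j = true :=
  Finset.eq_of_subset_of_card_le
    (Finset.image_subset_iff.2 fun i _ => Finset.mem_filter.2 ⟨Finset.mem_univ _, hev i⟩)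
    (by rw [hk, Finset.card_image_of_injective _ he, Finset.card_univ, Fintype.card_fin])

end BinaryVectors

section LiftedSubspaces

variable {F : Type*} [Field F] {n k : ℕ} {e : Fin k → Fin n} {c : Fin (n - k) → Fin n}

theorem liftMat_apply_pivot (he : Function.Injective e) (hec : ∀ i j, e i ≠ c j)
    (A : Matrix (Fin k) (Fin (n - k)) F) (i i' : Fin k) :
    liftMat e c A i (e i') = (1 : Matrix (Fin k) (Fin k) F) i i' := by
  simp [liftMat, Matrix.one_apply, he.eq_iff, hec, eq_comm]

theorem liftMat_apply_of_lt {A : Matrix (Fin k) (Fin (n - k)) F}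
    (hA : ∀ i j, c j < e i → A i j = 0) {i : Fin k} {s : Fin n} (hs : s < e i) :
    liftMat e c A i s = 0 := by
  rw [liftMat, if_neg hs.ne, zero_add]
  refine Finset.sum_eq_zero fun j _ => ?_
  split_ifs with h
  exacts [hA i j (h ▸ hs), rfl]

theorem liftMat_mul_submatrix_one (he : Function.Injective e) (hec : ∀ i j, e i ≠ c j)
    (A : Matrix (Fin k) (Fin (n - k)) F) :
    liftMat e c A * (1 : Matrix (Fin n) (Fin n) F).submatrix id e = 1 := by
  rw [← Equiv.coe_refl, Matrix.mul_submatrix_one]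
  ext i i'
  exact liftMat_apply_pivot he hec A i i'

theorem liftMat_sub_liftMat (A B : Matrix (Fin k) (Fin (n - k)) F) :
    liftMat e c A - liftMat e c B = (A - B) * (1 : Matrix (Fin n) (Fin n) F).submatrix c id := by
  ext i t
  simp [liftMat, Matrix.mul_apply, Matrix.one_apply, eq_comm, ← Finset.sum_sub_distrib,
    ite_sub_ite]

theorem finrank_span_liftMat (he : Function.Injective e) (hec : ∀ i j, e i ≠ c j)
    (A : Matrix (Fin k) (Fin (n - k)) F) :
    finrank F (span F (Set.range (liftMat e c A))) = k := by
  rw [finrank_span_range_of_mul_eq_one (liftMat_mul_submatrix_one he hec A), Fintype.card_fin]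

theorem add_rank_sub_le_finrank_sup_span_liftMat (he : Function.Injective e)
    (hc : Function.Injective c) (hec : ∀ i j, e i ≠ c j)
    (A B : Matrix (Fin k) (Fin (n - k)) F) :
    k + (A - B).rank ≤ finrank F ↥(span F (Set.range (liftMat e c A)) ⊔
      span F (Set.range (liftMat e c B))) := by
  have hP : (1 : Matrix (Fin n) (Fin n) F).submatrix c id *
      (1 : Matrix (Fin n) (Fin n) F).submatrix id c = 1 := by
    ext j j'
    simp [Matrix.mul_apply, Matrix.one_apply, hc.eq_iff]
  have := finrank_span_add_rank_sub_le_finrank_sup (liftMat_mul_submatrix_one he hec A)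
    (liftMat_mul_submatrix_one he hec B)
  rwa [finrank_span_liftMat he hec, liftMat_sub_liftMat,
    Matrix.rank_mul_eq_left_of_mul_eq_one hP] at this

theorem exists_mem_span_liftMat_leading (he : Function.Injective e) (hec : ∀ i j, e i ≠ c j)
    {A : Matrix (Fin k) (Fin (n - k)) F} (hA : ∀ i j, c j < e i → A i j = 0) (i : Fin k) :
    ∃ x ∈ span F (Set.range (liftMat e c A)), x (e i) ≠ 0 ∧ ∀ s < e i, x s = 0 :=
  ⟨liftMat e c A i, subset_span ⟨i, rfl⟩, by simp [liftMat_apply_pivot he hec],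
    fun _ hs => liftMat_apply_of_lt hA hs⟩

theorem card_union_image_le_finrank_sup_span_liftMat {e' : Fin k → Fin n}
    {c' : Fin (n - k) → Fin n} (he : Function.Injective e) (he' : Function.Injective e')
    (hec : ∀ i j, e i ≠ c j) (hec' : ∀ i j, e' i ≠ c' j)
    {A B : Matrix (Fin k) (Fin (n - k)) F} (hA : ∀ i j, c j < e i → A i j = 0)
    (hB : ∀ i j, c' j < e' i → B i j = 0) :
    (Finset.univ.image e ∪ Finset.univ.image e').card ≤
      finrank F ↥(span F (Set.range (liftMat e c A)) ⊔
        span F (Set.range (liftMat e' c' B))) := by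
  refine card_le_finrank_of_forall_exists_leading _ _ fun t ht => ?_
  rcases Finset.mem_union.1 ht with ht | ht
  · obtain ⟨i, -, rfl⟩ := Finset.mem_image.1 ht
    obtain ⟨x, hx, hlead⟩ := exists_mem_span_liftMat_leading he hec hA i
    exact ⟨x, mem_sup_left hx, hlead⟩
  · obtain ⟨i, -, rfl⟩ := Finset.mem_image.1 ht
    obtain ⟨x, hx, hlead⟩ := exists_mem_span_liftMat_leading he' hec' hB i
    exact ⟨x, mem_sup_right hx, hlead⟩

end LiftedSubspaces

theorem multilevel_construction_general {F : Type*} [Field F] {n k δ : ℕ} (hδ : 0 < δ)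
    (S : Finset (Fin n → Bool))
    (hwt : ∀ v ∈ S, (Finset.univ.filter fun j => v j = true).card = k)
    (hdH : ∀ v ∈ S, ∀ v' ∈ S, v ≠ v' →
      2 * δ ≤ (Finset.univ.filter fun j => v j ≠ v' j).card)
    (e : (Fin n → Bool) → Fin k → Fin n) (c : (Fin n → Bool) → Fin (n - k) → Fin n)
    (he : ∀ v ∈ S, StrictMono (e v)) (hc : ∀ v ∈ S, StrictMono (c v))
    (hev : ∀ v ∈ S, ∀ i, v (e v i) = true) (hcv : ∀ v ∈ S, ∀ j, v (c v j) = false)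
    (C : (Fin n → Bool) → Finset (Matrix (Fin k) (Fin (n - k)) F))
    (hsupp : ∀ v ∈ S, ∀ A ∈ C v, ∀ i j, c v j < e v i → A i j = 0)
    (hdist : ∀ v ∈ S, ∀ A ∈ C v, ∀ B ∈ C v, A ≠ B → δ ≤ (A - B).rank) :
    (∀ v ∈ S, ∀ A ∈ C v,
      Module.finrank F ↥(Submodule.span F (Set.range (liftMat (e v) (c v) A))) = k) ∧
    (∀ v ∈ S, ∀ v' ∈ S, ∀ A ∈ C v, ∀ B ∈ C v', (v, A) ≠ (v', B) →
      Submodule.span F (Set.range (liftMat (e v) (c v) A)) ≠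
        Submodule.span F (Set.range (liftMat (e v') (c v') B))) ∧
    (∀ v ∈ S, ∀ v' ∈ S, ∀ A ∈ C v, ∀ B ∈ C v', (v, A) ≠ (v', B) →
      2 * δ ≤ sdist (Submodule.span F (Set.range (liftMat (e v) (c v) A)))
        (Submodule.span F (Set.range (liftMat (e v') (c v') B)))) := by
  have hec (v) (hv : v ∈ S) (i j) : e v i ≠ c v j := fun h => by
    simpa [h, hcv v hv j] using hev v hv i
  have hdim (v) (hv : v ∈ S) (A) : finrank F (span F (Set.range (liftMat (e v) (c v) A))) = k :=
    finrank_span_liftMat (he v hv).injective (hec v hv) A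
  have hsdist : ∀ v ∈ S, ∀ v' ∈ S, ∀ A ∈ C v, ∀ B ∈ C v', (v, A) ≠ (v', B) →
      2 * δ ≤ sdist (span F (Set.range (liftMat (e v) (c v) A)))
        (span F (Set.range (liftMat (e v') (c v') B))) := by
    intro v hv v' hv' A hA B hB hne
    refine two_mul_le_sdist (hdim v hv A) (hdim v' hv' B) ?_
    by_cases hvv : v = v'
    · subst hvv
      exact (Nat.add_le_add_left (hdist v hv A hA B hB fun h => hne (h ▸ rfl)) k).trans
        (add_rank_sub_le_finrank_sup_span_liftMat (he v hv).injective (hc v hv).injective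
          (hec v hv) A B)
    · have hunion := card_union_image_le_finrank_sup_span_liftMat (he v hv).injective
        (he v' hv').injective (hec v hv) (hec v' hv') (hsupp v hv A hA) (hsupp v' hv' B hB)
      rw [image_eq_filter_of_card_eq (he v hv).injective (hev v hv) (hwt v hv),
        image_eq_filter_of_card_eq (he v' hv').injective (hev v' hv') (hwt v' hv')] at hunion
      have hcount := card_filter_add_card_filter_add_card_filter_ne v v'
      rw [hwt v hv, hwt v' hv'] at hcount
      have := hdH v hv v' hv' hvv
      omega
  refine ⟨fun v hv A _ => hdim v hv A, fun v hv v' hv' A hA B hB hne heq => ?_, hsdist⟩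
  have := hsdist v hv v' hv' A hA B hB hne
  rw [heq, sdist_self] at this
  omega

/-- Multilevel construction (Etzion–Silberstein). Let `S ⊆ F_2^n` be a binary
constant-weight code of weight `k` and minimum Hamming distance `2δ`; for each `v ∈ S`
let `e v` (resp. `c v`) strictly monotonically enumerate the support (resp. the
complement of the support) of `v`, and let `C v` be an `(F_v, |C v|, δ)_q` Ferrers diagram
rank-metric code. Then the union of the lifted codes `⋃_{v∈S} L(C v)` is an
`(n, Σ_{v∈S}|C v|, 2δ, {k})_q` constant dimension code: all lifted subspaces are
`k`-dimensional, lifted subspaces coming from distinct pairs `(v,A)` are distinct, and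
any two distinct lifted subspaces are at subspace distance at least `2δ`. -/
theorem multilevel_construction {F : Type*} [Field F] [Fintype F] {n k δ : ℕ} (hδ : 0 < δ)
    (S : Finset (Fin n → Bool))
    (hwt : ∀ v ∈ S, (Finset.univ.filter fun j => v j = true).card = k)
    (hdH : ∀ v ∈ S, ∀ v' ∈ S, v ≠ v' →
      2 * δ ≤ (Finset.univ.filter fun j => v j ≠ v' j).card)
    (e : (Fin n → Bool) → Fin k → Fin n) (c : (Fin n → Bool) → Fin (n - k) → Fin n)
    (he : ∀ v ∈ S, StrictMono (e v)) (hc : ∀ v ∈ S, StrictMono (c v))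
    (hev : ∀ v ∈ S, ∀ i, v (e v i) = true) (hcv : ∀ v ∈ S, ∀ j, v (c v j) = false)
    (C : (Fin n → Bool) → Finset (Matrix (Fin k) (Fin (n - k)) F))
    (hsupp : ∀ v ∈ S, ∀ A ∈ C v, ∀ i j, c v j < e v i → A i j = 0)
    (hdist : ∀ v ∈ S, ∀ A ∈ C v, ∀ B ∈ C v, A ≠ B → δ ≤ (A - B).rank) :
    (∀ v ∈ S, ∀ A ∈ C v,
      Module.finrank F ↥(Submodule.span F (Set.range (liftMat (e v) (c v) A))) = k) ∧
    (∀ v ∈ S, ∀ v' ∈ S, ∀ A ∈ C v, ∀ B ∈ C v', (v, A) ≠ (v', B) →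
      Submodule.span F (Set.range (liftMat (e v) (c v) A)) ≠
        Submodule.span F (Set.range (liftMat (e v') (c v') B))) ∧
    (∀ v ∈ S, ∀ v' ∈ S, ∀ A ∈ C v, ∀ B ∈ C v', (v, A) ≠ (v', B) →
      2 * δ ≤ sdist (Submodule.span F (Set.range (liftMat (e v) (c v) A)))
        (Submodule.span F (Set.range (liftMat (e v') (c v') B)))) :=
  multilevel_construction_general hδ S hwt hdH e c he hc hev hcv C hsupp hdist
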